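/- arXiv:1401.5017 — 2 statements merged into one kernel-verified Lean document; each statement's English description precedes it below -/
import Mathlib

section
/- Let X be a metric space, let N ≥ 2, and let K_1, …, K_N be nonempty, pairwise disjoint compact subsets of X. Let δ := min over pairs i < j of dist(K_i, K_j), and assume δ > 0. For each ℓ let U_ℓ := {x ∈ X : dist(x, K_ℓ) < δ/10}. Let L ≥ 0 and M ≥ 0, and let f : K_1 ∪ ⋯ ∪ K_N → ℝ be an L-Lipschitz function with |f(x)| ≤ M for all x in its domain. For each ℓ let c_ℓ denote the Lipschitz constant of the restriction f|_{K_ℓ}. Then there exists a function f̂ : X → ℝ such that: (i) f̂ = f on K_1 ∪ ⋯ ∪ K_N; (ii) f̂ is 2L-Lipschitz on X; (iii) |f̂(x)| ≤ 2M for all x ∈ X; and (iv) for each ℓ, the restriction f̂|_{U_ℓ} is c_ℓ-Lipschitz. -/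
/-!
On each piece `K ℓ`, McShane's extension with the optimal constant `c ℓ`, truncated at `M`,
gives an extension `φ ℓ` that is `c ℓ`-Lipschitz on all of `X`. The `δ/10`-neighbourhoods `U ℓ`
are pairwise `4δ/5` apart, so gluing the `φ ℓ` on `⋃ U ℓ` is well defined, and across two
neighbourhoods the detour `x → a → b → y` through nearest points `a ∈ K i`, `b ∈ K j` costs at
most `L (dist x y + 4δ/10) ≤ 2L dist x y`. A final truncated McShane extension of the glued
function to `X` keeps all of this.
-/

open Metric Set Function
open scoped NNReal

theorem exists_eqOn_of_pairwise_disjoint {α ι Z : Type*} [Nonempty Z] {U : ι → Set α}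
    (hU : Pairwise (Disjoint on U)) (φ : ι → α → Z) :
    ∃ h : α → Z, ∀ i, EqOn h (φ i) (U i) := by
  classical
  refine ⟨fun x => if hx : ∃ i, x ∈ U i then φ hx.choose x else Classical.arbitrary Z,
    fun i x hxi => ?_⟩
  have hx : ∃ i, x ∈ U i := ⟨i, hxi⟩
  have : hx.choose = i := by_contra fun hne => (hU hne).le_bot ⟨hx.choose_spec, hxi⟩
  simp only [dif_pos hx, this]

section

variable {X Y : Type*} [PseudoMetricSpace X] [PseudoMetricSpace Y]

theorem LipschitzOnWith.exists_lipschitzWith_extension_abs_le {f : X → ℝ} {s : Set X} {K : ℝ≥0}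
    {M : ℝ} (hf : LipschitzOnWith K f s) (hfM : ∀ x ∈ s, |f x| ≤ M) (hM : 0 ≤ M) :
    ∃ g : X → ℝ, LipschitzWith K g ∧ EqOn f g s ∧ ∀ x, |g x| ≤ M := by
  obtain ⟨g, hg, hfg⟩ := hf.extend_real
  have hMM : -M ≤ M := by linarith
  refine ⟨fun x => projIcc (-M) M hMM (g x), ?_, fun x hx => ?_, fun x => ?_⟩
  · have := (LipschitzWith.subtype_val _).comp ((LipschitzWith.projIcc hMM).comp hg)
    rwa [one_mul, one_mul] at this
  · dsimp only
    rw [← hfg hx, projIcc_of_mem hMM (abs_le.1 (hfM x hx))]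
  · exact abs_le.2 (projIcc (-M) M hMM (g x)).2

def lipschitzConstants (f : X → ℝ) (s : Set X) : Set ℝ :=
  {L' | 0 ≤ L' ∧ ∀ x ∈ s, ∀ y ∈ s, |f x - f y| ≤ L' * dist x y}

theorem isClosed_lipschitzConstants (f : X → ℝ) (s : Set X) :
    IsClosed (lipschitzConstants f s) := by
  refine isClosed_Ici.inter
    (?_ : IsClosed {L' : ℝ | ∀ x ∈ s, ∀ y ∈ s, |f x - f y| ≤ L' * dist x y})
  simp only [ofPred_forall]
  exact isClosed_biInter fun x _ => isClosed_biInter fun y _ =>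
    isClosed_le continuous_const (continuous_id.mul continuous_const)

theorem sInf_lipschitzConstants_mem {f : X → ℝ} {s : Set X} {L : ℝ}
    (hL : L ∈ lipschitzConstants f s) :
    sInf (lipschitzConstants f s) ∈ lipschitzConstants f s ∧
      sInf (lipschitzConstants f s) ≤ L := by
  have hbdd : BddBelow (lipschitzConstants f s) := ⟨0, fun _ h => h.1⟩
  exact ⟨(isClosed_lipschitzConstants f s).csInf_mem ⟨L, hL⟩ hbdd, csInf_le hbdd hL⟩

theorem lipschitzOnWith_of_mem_lipschitzConstants {f : X → ℝ} {s : Set X} {c : ℝ}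
    (hc : c ∈ lipschitzConstants f s) : LipschitzOnWith ⟨c, hc.1⟩ f s :=
  LipschitzOnWith.of_dist_le_mul fun x hx y hy => hc.2 x hx y hy

noncomputable def pieceSeparation {ι : Type*} [LT ι] (K : ι → Set X) : ℝ :=
  sInf {d : ℝ | ∃ i j : ι, i < j ∧ d = sInf (image2 dist (K i) (K j))}

theorem pieceSeparation_le_dist {ι : Type*} [LinearOrder ι] (K : ι → Set X) {i j : ι}
    (hij : i ≠ j) {a b : X} (ha : a ∈ K i) (hb : b ∈ K j) :
    pieceSeparation K ≤ dist a b := by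
  wlog hlt : i < j generalizing i j a b
  · rw [dist_comm]
    exact this hij.symm hb ha (hij.lt_or_gt.resolve_left hlt)
  have hnonneg : ∀ i j : ι, ∀ d ∈ image2 dist (K i) (K j), 0 ≤ d := by
    rintro i j _ ⟨a, -, b, -, rfl⟩
    exact dist_nonneg
  calc pieceSeparation K ≤ sInf (image2 dist (K i) (K j)) := by
        refine csInf_le ⟨0, ?_⟩ ⟨i, j, hlt, rfl⟩
        rintro _ ⟨i, j, -, rfl⟩
        exact Real.sInf_nonneg (hnonneg i j)
    _ ≤ dist a b := csInf_le ⟨0, hnonneg i j⟩ (mem_image2_of_mem ha hb)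

theorem disjoint_setOf_infDist_lt {A B : Set X} (hA : A.Nonempty) (hB : B.Nonempty) {r : ℝ}
    (hAB : ∀ a ∈ A, ∀ b ∈ B, 2 * r ≤ dist a b) :
    Disjoint {x | infDist x A < r} {x | infDist x B < r} := by
  refine disjoint_left.2 fun x hxA hxB => ?_
  obtain ⟨a, ha, hxa⟩ := (infDist_lt_iff hA).1 hxA
  obtain ⟨b, hb, hxb⟩ := (infDist_lt_iff hB).1 hxB
  linarith [hAB a ha b hb, dist_triangle_left a b x]

/-- `6 * r ≤ dist a b` forces `4 * r ≤ dist x y`, which absorbs the excess `4 * r` of the detour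
`x → a → b → y` over `dist x y`. -/
theorem dist_le_two_mul_of_detour {L r : ℝ} {x y a b : X} {u p q v : Y} (hL : 0 ≤ L)
    (hup : dist u p ≤ L * dist x a) (hpq : dist p q ≤ L * dist a b)
    (hqv : dist q v ≤ L * dist b y) (hxa : dist x a < r) (hyb : dist y b < r)
    (hab : 6 * r ≤ dist a b) : dist u v ≤ 2 * L * dist x y := by
  have hab' : dist a b ≤ dist x a + dist x y + dist y b := by
    linarith [dist_triangle4 a x y b, dist_comm a x]
  calc dist u v ≤ dist u p + dist p q + dist q v := dist_triangle4 u p q v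
    _ ≤ L * (dist x a + dist a b + dist y b) := by rw [dist_comm b y] at hqv; linarith
    _ ≤ L * (2 * dist x y) := by gcongr; linarith
    _ = 2 * L * dist x y := by ring

theorem lipschitzOnWith_two_mul_of_eqOn_near_pieces {ι : Type*} {K : ι → Set X} {δ : ℝ}
    {L : ℝ≥0} {f h : X → ℝ} {φ : ι → X → ℝ} (hKne : ∀ i, (K i).Nonempty)
    (hδ : ∀ i j, i ≠ j → ∀ a ∈ K i, ∀ b ∈ K j, δ ≤ dist a b)
    (hf : LipschitzOnWith L f (⋃ i, K i)) (hφ : ∀ i, LipschitzWith L (φ i))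
    (hφf : ∀ i, EqOn f (φ i) (K i)) (hh : ∀ i, EqOn h (φ i) {x | infDist x (K i) < δ / 10}) :
    LipschitzOnWith (2 * L) h (⋃ i, {x | infDist x (K i) < δ / 10}) := by
  refine LipschitzOnWith.of_dist_le_mul fun x hx y hy => ?_
  obtain ⟨i, hxi⟩ := mem_iUnion.1 hx
  obtain ⟨j, hyj⟩ := mem_iUnion.1 hy
  rw [hh i hxi, hh j hyj, NNReal.coe_mul, NNReal.coe_ofNat]
  rcases eq_or_ne i j with rfl | hij
  · exact ((hφ i).dist_le_mul x y).trans
      (mul_le_mul_of_nonneg_right (by linarith [L.2]) dist_nonneg)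
  obtain ⟨a, ha, hxa⟩ := (infDist_lt_iff (hKne i)).1 hxi
  obtain ⟨b, hb, hyb⟩ := (infDist_lt_iff (hKne j)).1 hyj
  refine dist_le_two_mul_of_detour (p := f a) (q := f b) L.2 ?_ ?_ ?_ hxa hyb
    (by linarith [hδ i j hij a ha b hb, dist_nonneg (x := x) (y := a)])
  · rw [hφf i ha]; exact (hφ i).dist_le_mul x a
  · exact hf.dist_le_mul a (mem_iUnion_of_mem i ha) b (mem_iUnion_of_mem j hb)
  · rw [hφf j hb]; exact (hφ j).dist_le_mul b y

end

theorem lipschitz_extension_pieces_general {X : Type*} [MetricSpace X]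
    (N : ℕ)
    (K : Fin N → Set X)
    (hKne : ∀ ℓ, (K ℓ).Nonempty)
    (δ : ℝ)
    (hδdef : δ = sInf {d : ℝ | ∃ i j : Fin N, i < j ∧
      d = sInf (Set.image2 dist (K i) (K j))})
    (hδpos : 0 < δ)
    (L M : ℝ) (hL : 0 ≤ L) (hM : 0 ≤ M)
    (f : X → ℝ)
    (hfLip : ∀ x ∈ ⋃ ℓ, K ℓ, ∀ y ∈ ⋃ ℓ, K ℓ, |f x - f y| ≤ L * dist x y)
    (hfBdd : ∀ x ∈ ⋃ ℓ, K ℓ, |f x| ≤ M)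
    (c : Fin N → ℝ)
    (hc : ∀ ℓ, c ℓ = sInf {L' : ℝ | 0 ≤ L' ∧
      ∀ x ∈ K ℓ, ∀ y ∈ K ℓ, |f x - f y| ≤ L' * dist x y}) :
    ∃ g : X → ℝ,
      (∀ x ∈ ⋃ ℓ, K ℓ, g x = f x) ∧
      (∀ x y : X, |g x - g y| ≤ 2 * L * dist x y) ∧
      (∀ x : X, |g x| ≤ 2 * M) ∧
      (∀ ℓ : Fin N,
        ∀ x ∈ {z : X | infDist z (K ℓ) < δ / 10},
        ∀ y ∈ {z : X | infDist z (K ℓ) < δ / 10},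
          |g x - g y| ≤ c ℓ * dist x y) := by
  lift L to ℝ≥0 using hL
  set U : Fin N → Set X := fun ℓ => {z | infDist z (K ℓ) < δ / 10}
  have hδ : ∀ i j, i ≠ j → ∀ a ∈ K i, ∀ b ∈ K j, δ ≤ dist a b := fun i j hij a ha b hb =>
    hδdef ▸ pieceSeparation_le_dist K hij ha hb
  have hcL : ∀ ℓ, c ℓ ∈ lipschitzConstants f (K ℓ) ∧ c ℓ ≤ L := fun ℓ =>
    hc ℓ ▸ sInf_lipschitzConstants_mem ⟨L.2, fun x hx y hy =>
      hfLip x (mem_iUnion_of_mem ℓ hx) y (mem_iUnion_of_mem ℓ hy)⟩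
  choose φ hφLip hφEq hφBdd using fun ℓ =>
    (lipschitzOnWith_of_mem_lipschitzConstants (hcL ℓ).1).exists_lipschitzWith_extension_abs_le
      (fun x hx => hfBdd x (mem_iUnion_of_mem ℓ hx)) hM
  obtain ⟨h, hh⟩ := exists_eqOn_of_pairwise_disjoint (U := U) (fun i j hij =>
    disjoint_setOf_infDist_lt (hKne i) (hKne j) fun a ha b hb => by
      linarith [hδ i j hij a ha b hb]) φ
  have hhLip := lipschitzOnWith_two_mul_of_eqOn_near_pieces hKne hδ
    (LipschitzOnWith.of_dist_le_mul hfLip) (fun ℓ => (hφLip ℓ).weaken (hcL ℓ).2) hφEq hh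
  obtain ⟨g, hgLip, hhg, hgBdd⟩ := hhLip.exists_lipschitzWith_extension_abs_le (M := 2 * M)
    (fun x hx => by
      obtain ⟨i, hxi⟩ := mem_iUnion.1 hx
      linarith [hh i hxi ▸ hφBdd i x])
    (by positivity)
  have hgU : ∀ ℓ, EqOn g (φ ℓ) (U ℓ) := fun ℓ x hx =>
    (hhg (mem_iUnion_of_mem ℓ hx)).symm.trans (hh ℓ hx)
  have hKU : ∀ ℓ, K ℓ ⊆ U ℓ := fun ℓ x hx => by
    simp only [U, mem_ofPred_eq, infDist_zero_of_mem hx]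
    positivity
  refine ⟨g, fun x hx => ?_, fun x y => ?_, hgBdd, fun ℓ x hx y hy => ?_⟩
  · obtain ⟨ℓ, hxℓ⟩ := mem_iUnion.1 hx
    exact (hgU ℓ (hKU ℓ hxℓ)).trans (hφEq ℓ hxℓ).symm
  · simpa [Real.dist_eq] using hgLip.dist_le_mul x y
  · rw [hgU ℓ hx, hgU ℓ hy, ← Real.dist_eq]
    exact (hφLip ℓ).dist_le_mul x y

/-- Lipschitz extension with control on the neighborhoods of the pieces:
given pairwise disjoint nonempty compact sets `K 0, …, K (N-1)` at mutual
distance `δ > 0`, an `L`-Lipschitz function `f` on their union bounded by `M`,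
whose restriction to `K ℓ` has least Lipschitz constant `c ℓ`, there is an
extension `g` of `f` to all of `X` which is `2L`-Lipschitz, bounded by `2M`,
and whose restriction to the `δ/10`-neighborhood `U ℓ` of `K ℓ` is
`c ℓ`-Lipschitz. -/
theorem lipschitz_extension_pieces {X : Type*} [MetricSpace X]
    (N : ℕ) (hN : 2 ≤ N)
    (K : Fin N → Set X)
    (hKne : ∀ ℓ, (K ℓ).Nonempty)
    (hKcompact : ∀ ℓ, IsCompact (K ℓ))
    (hKdisj : ∀ i j : Fin N, i ≠ j → Disjoint (K i) (K j))
    (δ : ℝ)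
    (hδdef : δ = sInf {d : ℝ | ∃ i j : Fin N, i < j ∧
      d = sInf (Set.image2 dist (K i) (K j))})
    (hδpos : 0 < δ)
    (L M : ℝ) (hL : 0 ≤ L) (hM : 0 ≤ M)
    (f : X → ℝ)
    (hfLip : ∀ x ∈ ⋃ ℓ, K ℓ, ∀ y ∈ ⋃ ℓ, K ℓ, |f x - f y| ≤ L * dist x y)
    (hfBdd : ∀ x ∈ ⋃ ℓ, K ℓ, |f x| ≤ M)
    (c : Fin N → ℝ)
    (hc : ∀ ℓ, c ℓ = sInf {L' : ℝ | 0 ≤ L' ∧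
      ∀ x ∈ K ℓ, ∀ y ∈ K ℓ, |f x - f y| ≤ L' * dist x y}) :
    ∃ g : X → ℝ,
      (∀ x ∈ ⋃ ℓ, K ℓ, g x = f x) ∧
      (∀ x y : X, |g x - g y| ≤ 2 * L * dist x y) ∧
      (∀ x : X, |g x| ≤ 2 * M) ∧
      (∀ ℓ : Fin N,
        ∀ x ∈ {z : X | infDist z (K ℓ) < δ / 10},
        ∀ y ∈ {z : X | infDist z (K ℓ) < δ / 10},
          |g x - g y| ≤ c ℓ * dist x y) :=
  lipschitz_extension_pieces_general N K hKne δ hδdef hδpos L M hL hM f hfLip hfBdd c hc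
end

section
/- Let X be a metric space, let K_1 and K_2 be nonempty compact subsets of X with dist(K_1, K_2) ≥ δ for some δ > 0, and for i = 1, 2 let U_i := {x ∈ X : dist(x, K_i) < δ/10}. Let L ≥ 0 and c_1, c_2 ∈ [0, L], and let g : U_1 ∪ U_2 → ℝ be a function such that for i = 1, 2 the restriction g|_{U_i} is c_i-Lipschitz, and such that the restriction of g to K_1 ∪ K_2 is L-Lipschitz. Then for every x ∈ U_1 and every y ∈ U_2, |g(x) − g(y)| ≤ 2L·d(x,y). -/
open Metric

/-! Pick `x₀ ∈ K₁`, `y₀ ∈ K₂` within `δ/10` of `x` and `y`. Since `d(x₀, y₀) ≥ δ`, the detours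
`d(x, x₀) + d(y, y₀) < δ/5` are at most a quarter of `d(x, y)`, so chaining `g` along
`x → x₀ → y₀ → y` costs at most `L (d(x, y) + 2 (d(x, x₀) + d(y, y₀))) ≤ 2 L d(x, y)`. -/

section

variable {X : Type*} [PseudoMetricSpace X]

theorem dist_le_dist_add_dist_add_dist (x x₀ y y₀ : X) :
    dist x₀ y₀ ≤ dist x y + (dist x x₀ + dist y y₀) := by
  linarith [dist_triangle4 x₀ x y y₀, dist_comm x₀ x]

theorem four_mul_dist_add_dist_le_dist {x x₀ y y₀ : X}
    (h : 5 * (dist x x₀ + dist y y₀) ≤ dist x₀ y₀) :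
    4 * (dist x x₀ + dist y y₀) ≤ dist x y := by
  linarith [dist_le_dist_add_dist_add_dist x x₀ y y₀]

theorem abs_sub_le_of_chain {g : X → ℝ} {L : ℝ} (hL : 0 ≤ L) {x x₀ y y₀ : X}
    (hx : |g x - g x₀| ≤ L * dist x x₀) (h₀ : |g x₀ - g y₀| ≤ L * dist x₀ y₀)
    (hy : |g y₀ - g y| ≤ L * dist y₀ y) :
    |g x - g y| ≤ L * (dist x y + 2 * (dist x x₀ + dist y y₀)) := by
  have hg₁ := abs_sub_le (g x) (g x₀) (g y)
  have hg₂ := abs_sub_le (g x₀) (g y₀) (g y)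
  have hd := mul_le_mul_of_nonneg_left (dist_le_dist_add_dist_add_dist x x₀ y y₀) hL
  rw [dist_comm y₀ y] at hy
  linarith

end

theorem cross_neighborhood_lipschitz_general {X : Type*} [MetricSpace X]
    (K₁ K₂ : Set X) (hK₁ne : K₁.Nonempty) (hK₂ne : K₂.Nonempty)
    (δ : ℝ)
    (hdist : ∀ x ∈ K₁, ∀ y ∈ K₂, δ ≤ dist x y)
    (L c₁ c₂ : ℝ)
    (hc₁ : c₁ ∈ Set.Icc (0 : ℝ) L) (hc₂ : c₂ ∈ Set.Icc (0 : ℝ) L)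
    (g : X → ℝ)
    (hg₁ : ∀ x ∈ {z : X | infDist z K₁ < δ / 10},
           ∀ y ∈ {z : X | infDist z K₁ < δ / 10}, |g x - g y| ≤ c₁ * dist x y)
    (hg₂ : ∀ x ∈ {z : X | infDist z K₂ < δ / 10},
           ∀ y ∈ {z : X | infDist z K₂ < δ / 10}, |g x - g y| ≤ c₂ * dist x y)
    (hgL : ∀ x ∈ K₁ ∪ K₂, ∀ y ∈ K₁ ∪ K₂, |g x - g y| ≤ L * dist x y) :
    ∀ x ∈ {z : X | infDist z K₁ < δ / 10},
    ∀ y ∈ {z : X | infDist z K₂ < δ / 10},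
      |g x - g y| ≤ 2 * L * dist x y := by
  intro x hx y hy
  obtain ⟨x₀, hx₀, hxx₀⟩ := (infDist_lt_iff hK₁ne).1 hx
  obtain ⟨y₀, hy₀, hyy₀⟩ := (infDist_lt_iff hK₂ne).1 hy
  have hx₀U : infDist x₀ K₁ < δ / 10 := by
    rw [infDist_zero_of_mem hx₀]; exact infDist_nonneg.trans_lt hx
  have hy₀U : infDist y₀ K₂ < δ / 10 := by
    rw [infDist_zero_of_mem hy₀]; exact infDist_nonneg.trans_lt hy
  have hL : 0 ≤ L := hc₁.1.trans hc₁.2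
  have hchain := abs_sub_le_of_chain hL
    ((hg₁ x hx x₀ hx₀U).trans (by gcongr; exact hc₁.2))
    (hgL x₀ (.inl hx₀) y₀ (.inr hy₀))
    ((hg₂ y₀ hy₀U y hy).trans (by gcongr; exact hc₂.2))
  have hfar := four_mul_dist_add_dist_le_dist (x := x) (y := y)
    (by linarith [hdist x₀ hx₀ y₀ hy₀] : 5 * (dist x x₀ + dist y y₀) ≤ dist x₀ y₀)
  calc |g x - g y| ≤ L * (dist x y + 2 * (dist x x₀ + dist y y₀)) := hchain
    _ ≤ L * (dist x y + dist x y) := by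
      gcongr
      linarith [dist_nonneg (x := x) (y := x₀), dist_nonneg (x := y) (y := y₀)]
    _ = 2 * L * dist x y := by ring

/-- Cross-neighborhood Lipschitz bound: if `K₁, K₂` are nonempty compact sets
at distance `≥ δ > 0`, `U_i` is the `δ/10`-neighborhood of `K_i`, and
`g` is `c_i`-Lipschitz on `U_i` (with `0 ≤ c_i ≤ L`) and `L`-Lipschitz on
`K₁ ∪ K₂`, then `|g x − g y| ≤ 2 L d(x,y)` for all `x ∈ U₁`, `y ∈ U₂`. -/
theorem cross_neighborhood_lipschitz {X : Type*} [MetricSpace X]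
    (K₁ K₂ : Set X) (hK₁ne : K₁.Nonempty) (hK₂ne : K₂.Nonempty)
    (hK₁c : IsCompact K₁) (hK₂c : IsCompact K₂)
    (δ : ℝ) (hδ : 0 < δ)
    (hdist : ∀ x ∈ K₁, ∀ y ∈ K₂, δ ≤ dist x y)
    (L c₁ c₂ : ℝ) (hL : 0 ≤ L)
    (hc₁ : c₁ ∈ Set.Icc (0 : ℝ) L) (hc₂ : c₂ ∈ Set.Icc (0 : ℝ) L)
    (g : X → ℝ)
    (hg₁ : ∀ x ∈ {z : X | infDist z K₁ < δ / 10},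
           ∀ y ∈ {z : X | infDist z K₁ < δ / 10}, |g x - g y| ≤ c₁ * dist x y)
    (hg₂ : ∀ x ∈ {z : X | infDist z K₂ < δ / 10},
           ∀ y ∈ {z : X | infDist z K₂ < δ / 10}, |g x - g y| ≤ c₂ * dist x y)
    (hgL : ∀ x ∈ K₁ ∪ K₂, ∀ y ∈ K₁ ∪ K₂, |g x - g y| ≤ L * dist x y) :
    ∀ x ∈ {z : X | infDist z K₁ < δ / 10},
    ∀ y ∈ {z : X | infDist z K₂ < δ / 10},
      |g x - g y| ≤ 2 * L * dist x y :=
  cross_neighborhood_lipschitz_general K₁ K₂ hK₁ne hK₂ne δ hdist L c₁ c₂ hc₁ hc₂ g hg₁ hg₂ hgL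
end
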